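/- arXiv:2006.03988 — 4 statements merged into one kernel-verified Lean document; each statement's English description precedes it below -/
import Mathlib

section
/- Let p : ℕ → ℝ satisfy p(ℓ) ≥ 0 for all ℓ, and let k_ρ, k_ζ, k, M be natural numbers with k_ρ ≤ k_ζ ≤ k ≤ M. Set Z_ζ = ∑_{ℓ=k_ζ}^{M} p(ℓ)·p(0)^{ℓ−k_ζ} and Z_ρ = ∑_{ℓ=k_ρ}^{M} p(ℓ)·p(0)^{ℓ−k_ρ}, and assume Z_ζ > 0 and Z_ρ > 0. Then (1/Z_ζ)·∑_{ℓ=k_ζ}^{k} p(ℓ)·p(0)^{ℓ−k_ζ} ≤ (1/Z_ρ)·∑_{ℓ=k_ρ}^{k} p(ℓ)·p(0)^{ℓ−k_ρ}. -/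
/-!
Write `w_a ℓ = p ℓ * p 0 ^ (ℓ - a)` and split each normalising sum at `k` into a head `A_a`
(over `[a, k]`) and a tail `B_a` (over `(k, M]`). For `ℓ ≥ kζ` one has `w_kρ ℓ = c * w_kζ ℓ` with
`c = p 0 ^ (kζ - kρ)`, so `B_kρ = c * B_kζ` exactly, while `A_kρ ≥ c * A_kζ` because the head of
`kρ` has the extra nonnegative terms on `[kρ, kζ)`. Cross-multiplying, the claim
`A_kζ / (A_kζ + B_kζ) ≤ A_kρ / (A_kρ + c * B_kζ)` reduces to `c * A_kζ * B_kζ ≤ A_kρ * B_kζ`.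
-/

theorem Finset.sum_Icc_eq_sum_Icc_add_sum_Ioc {α M : Type*} [LinearOrder α] [LocallyFiniteOrder α]
    [AddCommMonoid M] (f : α → M) {a b c : α} (hab : a ≤ b) (hbc : b ≤ c) :
    ∑ x ∈ Icc a c, f x = ∑ x ∈ Icc a b, f x + ∑ x ∈ Ioc b c, f x := by
  have hdisj : Disjoint (Icc a b) (Ioc b c) :=
    disjoint_left.2 fun _ h₁ h₂ => (mem_Ioc.1 h₂).1.not_ge (mem_Icc.1 h₁).2
  have hunion : Icc a b ∪ Ioc b c = Icc a c := by
    rw [← coe_inj, coe_union, coe_Icc, coe_Ioc, coe_Icc, Set.Icc_union_Ioc_eq_Icc hab hbc]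
  rw [← sum_union hdisj, hunion]

theorem Finset.pow_sub_mul_sum_mul_pow_sub {R : Type*} [CommSemiring R]
    (f : ℕ → R) (x : R) {a b : ℕ} (hab : a ≤ b) (s : Finset ℕ) (hs : ∀ ℓ ∈ s, b ≤ ℓ) :
    x ^ (b - a) * ∑ ℓ ∈ s, f ℓ * x ^ (ℓ - b) = ∑ ℓ ∈ s, f ℓ * x ^ (ℓ - a) := by
  rw [mul_sum]
  refine sum_congr rfl fun ℓ hℓ => ?_
  rw [mul_left_comm, ← pow_add, add_comm, Nat.sub_add_sub_cancel (hs ℓ hℓ) hab]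

theorem div_add_le_div_add_mul {K : Type*} [Field K] [LinearOrder K] [IsStrictOrderedRing K]
    {A A' B c : K} (hB : 0 ≤ B) (hA : c * A ≤ A') (hpos : 0 < A + B) (hpos' : 0 < A' + c * B) :
    A / (A + B) ≤ A' / (A' + c * B) := by
  rw [div_le_div_iff₀ hpos hpos']
  nlinarith [mul_le_mul_of_nonneg_right hA hB]

open Finset in
/-- One-site conditional-distribution monotonicity (the FKG criterion inequality):
with `Z_ζ = ∑_{ℓ=k_ζ}^{M} p(ℓ)p(0)^{ℓ−k_ζ}` and `Z_ρ = ∑_{ℓ=k_ρ}^{M} p(ℓ)p(0)^{ℓ−k_ρ}`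
both positive, `(1/Z_ζ)∑_{ℓ=k_ζ}^{k} p(ℓ)p(0)^{ℓ−k_ζ} ≤ (1/Z_ρ)∑_{ℓ=k_ρ}^{k} p(ℓ)p(0)^{ℓ−k_ρ}`. -/
theorem fkg_conditional_monotonicity (p : ℕ → ℝ) (hp : ∀ ℓ, 0 ≤ p ℓ)
    (kρ kζ k M : ℕ) (h1 : kρ ≤ kζ) (h2 : kζ ≤ k) (h3 : k ≤ M)
    (hZζ : 0 < ∑ ℓ ∈ Icc kζ M, p ℓ * p 0 ^ (ℓ - kζ))
    (hZρ : 0 < ∑ ℓ ∈ Icc kρ M, p ℓ * p 0 ^ (ℓ - kρ)) :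
    (1 / ∑ ℓ ∈ Icc kζ M, p ℓ * p 0 ^ (ℓ - kζ)) * ∑ ℓ ∈ Icc kζ k, p ℓ * p 0 ^ (ℓ - kζ)
      ≤ (1 / ∑ ℓ ∈ Icc kρ M, p ℓ * p 0 ^ (ℓ - kρ)) * ∑ ℓ ∈ Icc kρ k, p ℓ * p 0 ^ (ℓ - kρ) := by
  have hw : ∀ a ℓ, 0 ≤ p ℓ * p 0 ^ (ℓ - a) := fun a ℓ => mul_nonneg (hp ℓ) (pow_nonneg (hp 0) _)
  have htail : ∑ ℓ ∈ Ioc k M, p ℓ * p 0 ^ (ℓ - kρ)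
      = p 0 ^ (kζ - kρ) * ∑ ℓ ∈ Ioc k M, p ℓ * p 0 ^ (ℓ - kζ) :=
    (pow_sub_mul_sum_mul_pow_sub p _ h1 _ fun ℓ hℓ => h2.trans (mem_Ioc.1 hℓ).1.le).symm
  have hhead : p 0 ^ (kζ - kρ) * ∑ ℓ ∈ Icc kζ k, p ℓ * p 0 ^ (ℓ - kζ)
      ≤ ∑ ℓ ∈ Icc kρ k, p ℓ * p 0 ^ (ℓ - kρ) := by
    rw [pow_sub_mul_sum_mul_pow_sub p _ h1 _ fun ℓ hℓ => (mem_Icc.1 hℓ).1]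
    exact sum_le_sum_of_subset_of_nonneg (Icc_subset_Icc_left h1) fun ℓ _ _ => hw kρ ℓ
  rw [sum_Icc_eq_sum_Icc_add_sum_Ioc _ h2 h3] at hZζ ⊢
  rw [sum_Icc_eq_sum_Icc_add_sum_Ioc _ (h1.trans h2) h3, htail] at hZρ ⊢
  rw [one_div_mul_eq_div, one_div_mul_eq_div]
  exact div_add_le_div_add_mul (sum_nonneg fun ℓ _ => hw kζ ℓ) hhead hZζ hZρ
end

section
/- There exists a constant C > 0 such that for all real numbers k > 4, all real u with √k < u ≤ k/2, and all ξ with 0 ≤ ξ ≤ 1/2, one has (1 − log(u²/k)/log k)^{−ξ} ≤ 1 + (C·ξ/log k)·(u²/k). -/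
/-!
Put `x = u²/k`, so that `1 < x` and `4x ≤ k`. By Bernoulli's inequality for exponents in `[0, 1]`,
`s^{-ξ} ≤ 1 + ξ (1/s - 1)`, and for `s = 1 - log x / log k` this is `1 + ξ log x / log (k/x)`.
It remains to see `log x · log k ≤ 8 x log (k/x)`: if `x ≤ √k` then `log (k/x) ≥ log k / 2` and
`log x ≤ x`; otherwise `log k < 2 log x`, `(log x)² ≤ 4x` and `log (k/x) ≥ log 4 > 1`.
-/

open Real

theorem rpow_neg_le_one_add_mul_inv_sub_one {s ξ : ℝ} (hs : 0 < s) (hξ0 : 0 ≤ ξ) (hξ1 : ξ ≤ 1) :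
    s ^ (-ξ) ≤ 1 + ξ * (s⁻¹ - 1) := by
  rw [rpow_neg hs.le, ← inv_rpow hs.le]
  simpa using rpow_one_add_le_one_add_mul_self (s := s⁻¹ - 1)
    (by linarith [inv_pos.2 hs]) hξ0 hξ1

theorem one_sub_div_rpow_neg_le {a L ξ : ℝ} (hL : 0 < L) (haL : a < L) (hξ0 : 0 ≤ ξ)
    (hξ1 : ξ ≤ 1) : (1 - a / L) ^ (-ξ) ≤ 1 + ξ * (a / (L - a)) := by
  have hs : 1 - a / L = (L - a) / L := by field_simp
  have hLa : 0 < L - a := sub_pos.2 haL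
  have hinv : ((L - a) / L)⁻¹ - 1 = a / (L - a) := by
    field_simp
    ring
  rw [hs, ← hinv]
  exact rpow_neg_le_one_add_mul_inv_sub_one (div_pos hLa hL) hξ0 hξ1

theorem sq_log_le_four_mul {x : ℝ} (hx : 1 ≤ x) : log x ^ 2 ≤ 4 * x := by
  have hsqrt : log x ≤ 2 * √x := by
    have h := log_le_sub_one_of_pos (sqrt_pos.2 (by linarith : (0 : ℝ) < x))
    rw [log_sqrt (by linarith)] at h
    linarith
  calc log x ^ 2 ≤ (2 * √x) ^ 2 := pow_le_pow_left₀ (log_nonneg hx) hsqrt 2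
    _ = 4 * x := by rw [mul_pow, sq_sqrt (by linarith)]; norm_num

theorem one_lt_log_four : 1 < log 4 := by
  have h : log 4 = 2 * log 2 := by
    rw [show (4 : ℝ) = 2 ^ 2 by norm_num, log_pow]
    norm_num
  linarith [log_two_gt_d9]

theorem log_mul_log_le {x k : ℝ} (hx : 1 ≤ x) (hxk : 4 * x ≤ k) :
    log x * log k ≤ 8 * x * (log k - log x) := by
  have hx0 : 0 < x := by linarith
  have hlogx : 0 ≤ log x := log_nonneg hx
  have hgap : log 4 ≤ log k - log x := by
    rw [← log_div (by linarith) hx0.ne']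
    exact log_le_log (by norm_num) ((le_div_iff₀ hx0).2 hxk)
  have hgap1 : 1 ≤ log k - log x := by linarith [one_lt_log_four]
  rcases le_or_gt (2 * log x) (log k) with hsmall | hlarge
  · have hlogx_le : log x ≤ x := by linarith [log_le_sub_one_of_pos hx0]
    nlinarith
  · nlinarith [sq_log_le_four_mul hx]

/-- There is a universal `C > 0` such that for `k > 4`, `√k < u ≤ k/2` and
`0 ≤ ξ ≤ 1/2`, one has `(1 − log(u²/k)/log k)^{−ξ} ≤ 1 + (Cξ/log k)·(u²/k)`. -/
theorem rpow_log_correction_bound :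
    ∃ C : ℝ, 0 < C ∧ ∀ k u ξ : ℝ, 4 < k → Real.sqrt k < u → u ≤ k / 2 →
      0 ≤ ξ → ξ ≤ 1 / 2 →
      (1 - Real.log (u ^ 2 / k) / Real.log k) ^ (-ξ)
        ≤ 1 + (C * ξ / Real.log k) * (u ^ 2 / k) := by
  refine ⟨8, by norm_num, fun k u ξ hk hku huk hξ0 hξ1 => ?_⟩
  have hk0 : 0 < k := by linarith
  have hu0 : 0 < u := (sqrt_nonneg k).trans_lt hku
  have hx1 : 1 ≤ u ^ 2 / k := by
    rw [le_div_iff₀ hk0, one_mul]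
    exact ((sqrt_lt' hu0).1 hku).le
  have hx4 : 4 * (u ^ 2 / k) ≤ k := by
    rw [mul_div_assoc', div_le_iff₀ hk0]
    nlinarith
  have hL : 0 < log k := log_pos (by linarith)
  have hxk : log (u ^ 2 / k) < log k := log_lt_log (by linarith) (by linarith)
  calc (1 - log (u ^ 2 / k) / log k) ^ (-ξ)
      ≤ 1 + ξ * (log (u ^ 2 / k) / (log k - log (u ^ 2 / k))) :=
        one_sub_div_rpow_neg_le hL hxk hξ0 (by linarith)
    _ ≤ 1 + ξ * (8 * (u ^ 2 / k) / log k) := by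
        gcongr 1 + ξ * ?_
        rw [div_le_div_iff₀ (sub_pos.2 hxk) hL]
        linarith [log_mul_log_le hx1 hx4]
    _ = 1 + (8 * ξ / log k) * (u ^ 2 / k) := by ring
end

section
/- There exists a constant c > 0 such that for all integers m ≥ 1 and N with (24·m)² ≤ N, one has ∑_{s₁=m}^{⌊N/24⌋} ∑_{s₂=m}^{⌊N/24⌋} ∑_{h=0}^{⌊N/12⌋} 1/(2h + s₁ + s₂)³ ≥ c·log N. -/
/-!
For `s₁ ≥ 2m`, the terms with `m ≤ s₂ ≤ s₁` and `h ≤ s₁` number at least `s₁² / 2` and are each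
at least `(4 s₁)⁻³`, so the inner double sum is at least `1 / (128 s₁)`. Summing over
`2m ≤ s₁ ≤ N / 24` and comparing with `∫ dx / x` gives `log ((N / 24 + 1) / (2m)) / 128`, and
`m ≤ √N / 24` makes that logarithm at least `(log N) / 3`.
-/

open Finset

theorem log_div_le_sum_Ico_inv {a b : ℕ} (ha : 0 < a) (hab : a ≤ b) :
    Real.log (b / a) ≤ ∑ k ∈ Ico a b, (k : ℝ)⁻¹ := by
  rw [← integral_inv (by simp [Set.uIcc_of_le (Nat.cast_le.mpr hab), ha.ne'])]
  exact (inv_antitoneOn_Icc_right (by exact_mod_cast ha)).integral_le_sum_Ico hab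

theorem inv_le_sum_sum_inv_cube {m s S H : ℕ} (hs : 0 < s) (hms : 2 * m ≤ s) (hsS : s ≤ S)
    (hsH : s ≤ H) :
    (128 * (s : ℝ))⁻¹ ≤
      ∑ s₂ ∈ Icc m S, ∑ h ∈ Icc 0 H, (1 : ℝ) / ((2 * h + s + s₂ : ℕ) : ℝ) ^ 3 := by
  have hterm : ∀ s₂ ∈ Icc m s, ∀ h ∈ Icc 0 s,
      1 / (4 * (s : ℝ)) ^ 3 ≤ 1 / ((2 * h + s + s₂ : ℕ) : ℝ) ^ 3 := by
    intro s₂ hs₂ h hh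
    simp only [mem_Icc] at hs₂ hh
    have hpos : (0 : ℝ) < (2 * h + s + s₂ : ℕ) := by exact_mod_cast (by omega)
    have hle : ((2 * h + s + s₂ : ℕ) : ℝ) ≤ 4 * s := by exact_mod_cast (by omega)
    gcongr
  have hcard : (s : ℝ) / 2 ≤ #(Icc m s) := by
    rw [Nat.card_Icc, Nat.cast_sub (by omega)]
    have : (2 * m : ℝ) ≤ s := by exact_mod_cast hms
    push_cast
    linarith
  calc (128 * (s : ℝ))⁻¹ = (s / 2) * s * (1 / (4 * (s : ℝ)) ^ 3) := by
        field_simp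
        ring
    _ ≤ #(Icc m s) * #(Icc 0 s) * (1 / (4 * (s : ℝ)) ^ 3) := by
        gcongr
        simp
    _ ≤ ∑ s₂ ∈ Icc m s, ∑ h ∈ Icc 0 s, (1 : ℝ) / ((2 * h + s + s₂ : ℕ) : ℝ) ^ 3 := by
        rw [mul_assoc, ← nsmul_eq_mul]
        refine card_nsmul_le_sum _ _ _ fun s₂ hs₂ => ?_
        rw [← nsmul_eq_mul]
        exact card_nsmul_le_sum _ _ _ (hterm s₂ hs₂)
    _ ≤ ∑ s₂ ∈ Icc m s, ∑ h ∈ Icc 0 H, (1 : ℝ) / ((2 * h + s + s₂ : ℕ) : ℝ) ^ 3 :=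
        sum_le_sum fun _ _ => sum_le_sum_of_subset_of_nonneg (Icc_subset_Icc_right hsH)
          fun _ _ _ => by positivity
    _ ≤ _ := sum_le_sum_of_subset_of_nonneg (Icc_subset_Icc_right hsS)
          fun _ _ _ => sum_nonneg fun _ _ => by positivity

theorem log_le_three_mul_log_div {m N : ℕ} (hm : 1 ≤ m) (hN : (24 * m) ^ 2 ≤ N) :
    Real.log N ≤ 3 * Real.log (((N / 24 + 1 : ℕ) : ℝ) / ((2 * m : ℕ) : ℝ)) := by
  have hN24 : N < 24 * (N / 24 + 1) := by omega
  have hm3 : 110592 * m ^ 3 ≤ N ^ 2 := by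
    have : (24 * m) ^ 4 ≤ N ^ 2 := by
      calc (24 * m) ^ 4 = ((24 * m) ^ 2) ^ 2 := by ring
        _ ≤ N ^ 2 := Nat.pow_le_pow_left hN 2
    nlinarith [Nat.pow_le_pow_right hm (show 3 ≤ 4 by norm_num)]
  have hcube : N * (2 * m) ^ 3 ≤ (N / 24 + 1) ^ 3 := by
    have : N * (2 * m) ^ 3 * 13824 ≤ (N / 24 + 1) ^ 3 * 13824 := by
      calc N * (2 * m) ^ 3 * 13824 = N * (110592 * m ^ 3) := by ring
        _ ≤ N * N ^ 2 := Nat.mul_le_mul_left N hm3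
        _ = N ^ 3 := by ring
        _ ≤ (24 * (N / 24 + 1)) ^ 3 := Nat.pow_le_pow_left hN24.le 3
        _ = (N / 24 + 1) ^ 3 * 13824 := by ring
    exact Nat.le_of_mul_le_mul_right this (by norm_num)
  have hm0 : (0 : ℝ) < ((2 * m : ℕ) : ℝ) := by exact_mod_cast (by omega)
  calc Real.log N ≤ Real.log ((((N / 24 + 1 : ℕ) : ℝ) / ((2 * m : ℕ) : ℝ)) ^ 3) := by
        apply Real.log_le_log (by exact_mod_cast (by nlinarith : 0 < N))
        rw [div_pow, le_div_iff₀ (by positivity)]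
        exact_mod_cast hcube
    _ = 3 * Real.log (((N / 24 + 1 : ℕ) : ℝ) / ((2 * m : ℕ) : ℝ)) := by
        rw [Real.log_pow]
        norm_num

/-- There is a constant `c > 0` such that for all integers `m ≥ 1` and `N ≥ (24m)²`,
`∑_{s₁=m}^{⌊N/24⌋} ∑_{s₂=m}^{⌊N/24⌋} ∑_{h=0}^{⌊N/12⌋} (2h+s₁+s₂)^{-3} ≥ c·log N`. -/
theorem triple_sum_log_lower_bound :
    ∃ c : ℝ, 0 < c ∧ ∀ m N : ℕ, 1 ≤ m → (24 * m) ^ 2 ≤ N →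
      c * Real.log N ≤
        ∑ s₁ ∈ Icc m (N / 24), ∑ s₂ ∈ Icc m (N / 24), ∑ h ∈ Icc 0 (N / 12),
          (1 : ℝ) / ((2 * h + s₁ + s₂ : ℕ) : ℝ) ^ 3 := by
  refine ⟨1 / 384, by norm_num, fun m N hm hN => ?_⟩
  have hmN : 2 * m ≤ N / 24 := (Nat.le_div_iff_mul_le (by norm_num)).mpr (by nlinarith)
  calc 1 / 384 * Real.log N
      ≤ 1 / 128 * Real.log (((N / 24 + 1 : ℕ) : ℝ) / ((2 * m : ℕ) : ℝ)) := by
        linarith [log_le_three_mul_log_div hm hN]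
    _ ≤ 1 / 128 * ∑ k ∈ Icc (2 * m) (N / 24), (k : ℝ)⁻¹ := by
        rw [← Ico_add_one_right_eq_Icc]
        gcongr
        exact log_div_le_sum_Ico_inv (by omega) (by omega)
    _ = ∑ k ∈ Icc (2 * m) (N / 24), (128 * (k : ℝ))⁻¹ := by
        simp only [mul_sum, mul_inv, one_div]
    _ ≤ ∑ s₁ ∈ Icc (2 * m) (N / 24), ∑ s₂ ∈ Icc m (N / 24), ∑ h ∈ Icc 0 (N / 12),
          (1 : ℝ) / ((2 * h + s₁ + s₂ : ℕ) : ℝ) ^ 3 := by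
        refine sum_le_sum fun s hs => ?_
        rw [mem_Icc] at hs
        exact inv_le_sum_sum_inv_cube (by omega) hs.1 hs.2
          (hs.2.trans (Nat.div_le_div_left (by norm_num) (by norm_num)))
    _ ≤ _ := sum_le_sum_of_subset_of_nonneg (Icc_subset_Icc_left (by omega))
          fun _ _ _ => sum_nonneg fun _ _ => sum_nonneg fun _ _ => by positivity
end

section
/- For every dimension d ≥ 1 there exists a constant c > 0 (depending only on d) such that for every symmetric positive-definite real d×d matrix Q, defining the norm ‖x‖ = √((1/d) ∑_{i,j=1}^d x_i (Q⁻¹)_{ij} x_j) on ℝ^d and D = det(Q)^{1/(2d)}, one has for every real L ≥ 1: the number of lattice points x ∈ ℤ^d with ‖x‖ ≤ L is at least c·D^d·L^d. -/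
open scoped BigOperators

noncomputable section

/-- The distribution of the `n`-step random walk on `ℤ^d` with step distribution `p`,
started at the origin: `rwStep p n y = P(S(n) = y)` (the `n`-fold convolution of `p`). -/
noncomputable def rwStep {d : ℕ} (p : (Fin d → ℤ) → ℝ) : ℕ → (Fin d → ℤ) → ℝ
  | 0, y => if y = 0 then 1 else 0
  | n + 1, y => ∑' x : Fin d → ℤ, rwStep p n x * p (y - x)

/-- Coercion of a lattice point of `ℤ^d` to a real vector. -/
def toR {d : ℕ} (x : Fin d → ℤ) : Fin d → ℝ := fun i => (x i : ℝ)

/-- The Euclidean length `|x|` of a lattice point. -/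
noncomputable def euclNorm {d : ℕ} (x : Fin d → ℤ) : ℝ :=
  Real.sqrt (∑ i, ((x i : ℝ)) ^ 2)

/-- The covariance matrix `Q` of the step distribution:
`Q i j = ∑_{x ∈ ℤ^d} xᵢ xⱼ p(x)`. -/
noncomputable def covMatrix {d : ℕ} (p : (Fin d → ℤ) → ℝ) : Matrix (Fin d) (Fin d) ℝ :=
  Matrix.of fun i j => ∑' x : Fin d → ℤ, (x i : ℝ) * (x j : ℝ) * p x

/-- The squared norm `‖x‖² = (1/d) ∑ᵢⱼ xᵢ (Q⁻¹)ᵢⱼ xⱼ` induced by `Q⁻¹`. -/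
noncomputable def qNormSq {d : ℕ} (Q : Matrix (Fin d) (Fin d) ℝ) (x : Fin d → ℝ) : ℝ :=
  (1 / (d : ℝ)) * ∑ i, ∑ j, x i * Q⁻¹ i j * x j

/-- The norm `‖x‖ = √((1/d) ∑ᵢⱼ xᵢ (Q⁻¹)ᵢⱼ xⱼ)` induced by `Q⁻¹`. -/
noncomputable def qNorm {d : ℕ} (Q : Matrix (Fin d) (Fin d) ℝ) (x : Fin d → ℝ) : ℝ :=
  Real.sqrt (qNormSq Q x)

/-- The scale factor `D = det(Q)^{1/(2d)}`. -/
noncomputable def Dconst {d : ℕ} (Q : Matrix (Fin d) (Fin d) ℝ) : ℝ :=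
  Q.det ^ ((1 : ℝ) / (2 * d))

/-! Writing `Q⁻¹ = Bᵀ B`, the ellipsoid `‖x‖ ≤ L/2` is the preimage under `B` of a fixed
ball, so its volume is a constant times `|det B|⁻¹ (L/2)^d = D^d (L/2)^d`. Integrating over a
unit cube the number of lattice translates that land in a set shows that some translate of
`ℤ^d` meets the ellipsoid in at least its volume many points (Blichfeldt); subtracting one of
them from the others gives as many lattice points with `‖x‖ ≤ L`. -/

open MeasureTheory Set Matrix
open scoped ENNReal Pointwise

namespace MeasureTheory.IsAddFundamentalDomain

variable {G α : Type*} [AddGroup G] [Countable G] [AddAction G α] [MeasurableSpace α]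
  [MeasurableSpace G] [MeasurableVAdd G α] {μ : Measure α} [VAddInvariantMeasure G α μ]
  {F s : Set α}

theorem setLIntegral_encard_vadd_mem (fund : IsAddFundamentalDomain G F μ)
    (hs : MeasurableSet s) :
    ∫⁻ v in F, ({g : G | g +ᵥ v ∈ s}.encard : ℝ≥0∞) ∂μ = μ s := by
  have hcount (v : α) :
      ∑' g : G, s.indicator 1 (g +ᵥ v) = ({g : G | g +ᵥ v ∈ s}.encard : ℝ≥0∞) :=
    (tsum_subtype {g : G | g +ᵥ v ∈ s} 1).symm.trans (ENNReal.tsum_set_one _)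
  calc ∫⁻ v in F, ({g : G | g +ᵥ v ∈ s}.encard : ℝ≥0∞) ∂μ
      = ∫⁻ v in F, ∑' g : G, s.indicator 1 (g +ᵥ v) ∂μ := by simp_rw [hcount]
    _ = ∑' g : G, ∫⁻ v in F, s.indicator 1 (g +ᵥ v) ∂μ := lintegral_tsum fun g =>
          ((measurable_one.indicator hs).comp (measurable_const_vadd g)).aemeasurable
    _ = μ s := by rw [← fund.lintegral_eq_tsum'', lintegral_indicator_one hs]

theorem exists_lt_encard_vadd_mem (fund : IsAddFundamentalDomain G F μ)
    (hs : MeasurableSet s) {n : ℕ} (h : n * μ F < μ s) :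
    ∃ v, (n : ℕ∞) < {g : G | g +ᵥ v ∈ s}.encard := by
  by_contra! hle
  refine h.not_ge ?_
  calc μ s = ∫⁻ v in F, ({g : G | g +ᵥ v ∈ s}.encard : ℝ≥0∞) ∂μ :=
        (fund.setLIntegral_encard_vadd_mem hs).symm
    _ ≤ ∫⁻ _ in F, (n : ℝ≥0∞) ∂μ := lintegral_mono fun v => by
        simpa using ENat.toENNReal_le.mpr (hle v)
    _ = n * μ F := setLIntegral_const F _

end MeasureTheory.IsAddFundamentalDomain

theorem MeasureTheory.IsAddFundamentalDomain.lt_encard_coe_mem_sub {E : Type*}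
    [AddCommGroup E] [MeasurableSpace E] [MeasurableAdd E] {Λ : AddSubgroup E} [Countable Λ]
    {μ : Measure E} [VAddInvariantMeasure Λ E μ] {F s : Set E}
    (fund : IsAddFundamentalDomain Λ F μ) (hs : MeasurableSet s) {n : ℕ} (h : n * μ F < μ s) :
    (n : ℕ∞) < {g : Λ | (g : E) ∈ s - s}.encard := by
  obtain ⟨v, hv⟩ := fund.exists_lt_encard_vadd_mem hs h
  obtain ⟨g₀, hg₀⟩ : {g : Λ | g +ᵥ v ∈ s}.Nonempty :=
    nonempty_iff_ne_empty.mpr fun h0 => by simp [h0] at hv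
  refine hv.trans_le (encard_le_encard_of_injOn (f := (· - g₀)) ?_ sub_left_injective.injOn)
  intro g hg
  exact ⟨g +ᵥ v, hg, g₀ +ᵥ v, hg₀, by simp [AddSubgroup.vadd_def]⟩

section

variable {d : ℕ}

theorem norm_toR (x : Fin d → ℤ) : ‖toR x‖ = ‖x‖ := by
  simp only [toR, Pi.norm_def]
  congr 2 with i

theorem finite_setOf_toR_mem {K : Set (Fin d → ℝ)} (hK : Bornology.IsBounded K) :
    {x : Fin d → ℤ | toR x ∈ K}.Finite := by
  obtain ⟨R, hR⟩ := hK.subset_closedBall 0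
  refine (isCompact_closedBall (0 : Fin d → ℤ) R).finite_of_discrete.subset fun x hx => ?_
  simpa [norm_toR] using hR hx

theorem lt_encard_toR_mem_sub {s : Set (Fin d → ℝ)} (hs : MeasurableSet s) {n : ℕ}
    (h : n < volume s) : (n : ℕ∞) < {x : Fin d → ℤ | toR x ∈ s - s}.encard := by
  let b := Pi.basisFun ℝ (Fin d)
  let e := (b.restrictScalars ℤ).equivFun.symm
  have he (x : Fin d → ℤ) : (e x : Fin d → ℝ) = toR x := by
    ext i
    simp [e, b, Module.Basis.equivFun_symm_apply, toR, Finset.sum_apply, Pi.single_apply]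
  have : Countable (Submodule.span ℤ (range b)).toAddSubgroup := e.surjective.countable
  have hF : volume (ZSpan.fundamentalDomain b) = 1 := by
    rw [ZSpan.fundamentalDomain_pi_basisFun, volume_pi_pi]
    simp
  have := (ZSpan.isAddFundamentalDomain' b volume).lt_encard_coe_mem_sub hs (n := n)
    (by rwa [hF, mul_one])
  rw [← encard_preimage_of_bijective e.bijective] at this
  convert this using 2
  ext x
  change toR x ∈ s - s ↔ (e x : Fin d → ℝ) ∈ s - s
  rw [he]

theorem volume_le_ncard_toR_mem {s K : Set (Fin d → ℝ)} (hs : MeasurableSet s)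
    (hsK : s - s ⊆ K) (hK : Bornology.IsBounded K) :
    volume s ≤ {x : Fin d → ℤ | toR x ∈ K}.ncard := by
  by_contra! hlt
  exact ((lt_encard_toR_mem_sub hs hlt).trans_le (encard_le_encard fun _ hx => hsK hx)).ne
    (finite_setOf_toR_mem hK).cast_ncard_eq

def ellipsoid (Q : Matrix (Fin d) (Fin d) ℝ) (r : ℝ) : Set (Fin d → ℝ) :=
  {v | qNorm Q v ≤ r}

theorem qNormSq_eq_dotProduct (Q : Matrix (Fin d) (Fin d) ℝ) (v : Fin d → ℝ) :
    qNormSq Q v = 1 / d * (v ⬝ᵥ Q⁻¹ *ᵥ v) := by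
  simp [qNormSq, dotProduct, mulVec, Finset.mul_sum, mul_assoc]

theorem qNorm_smul (Q : Matrix (Fin d) (Fin d) ℝ) (c : ℝ) (v : Fin d → ℝ) :
    qNorm Q (c • v) = |c| * qNorm Q v := by
  have hsq : qNormSq Q (c • v) = c ^ 2 * qNormSq Q v := by
    simp only [qNormSq_eq_dotProduct, mulVec_smul, dotProduct_smul, smul_dotProduct, smul_eq_mul]
    ring
  rw [qNorm, qNorm, hsq, Real.sqrt_mul (sq_nonneg c), Real.sqrt_sq_eq_abs]

theorem continuous_qNorm (Q : Matrix (Fin d) (Fin d) ℝ) : Continuous (qNorm Q) := by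
  unfold qNorm qNormSq
  fun_prop

theorem measurableSet_ellipsoid (Q : Matrix (Fin d) (Fin d) ℝ) (r : ℝ) :
    MeasurableSet (ellipsoid Q r) :=
  (isClosed_le (continuous_qNorm Q) continuous_const).measurableSet

theorem ellipsoid_eq_smul (Q : Matrix (Fin d) (Fin d) ℝ) {r : ℝ} (hr : 0 < r) :
    ellipsoid Q r = r • ellipsoid Q 1 := by
  ext v
  rw [mem_smul_set_iff_inv_smul_mem₀ hr.ne']
  simp only [ellipsoid, mem_ofPred_eq, qNorm_smul, abs_inv, abs_of_pos hr]
  rw [inv_mul_le_iff₀ hr, mul_one]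

theorem qNorm_one_eq_norm (w : Fin d → ℝ) :
    qNorm 1 w = ‖(WithLp.toLp 2 w : EuclideanSpace ℝ (Fin d))‖ / √d := by
  rw [qNorm, qNormSq_eq_dotProduct, inv_one, one_mulVec, EuclideanSpace.norm_eq,
    ← Real.sqrt_div (Finset.sum_nonneg fun i _ => sq_nonneg _), one_div_mul_eq_div]
  simp [dotProduct, sq]

theorem qNorm_eq_qNorm_one_mulVec {Q B : Matrix (Fin d) (Fin d) ℝ} (hB : Q⁻¹ = Bᵀ * B)
    (v : Fin d → ℝ) : qNorm Q v = qNorm 1 (B *ᵥ v) := by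
  rw [qNorm, qNorm, qNormSq_eq_dotProduct, qNormSq_eq_dotProduct, hB, inv_one, one_mulVec,
    ← mulVec_mulVec, dotProduct_mulVec, vecMul_transpose]

open scoped MatrixOrder in
theorem Matrix.PosDef.exists_inv_eq_transpose_mul {Q : Matrix (Fin d) (Fin d) ℝ}
    (hQ : Q.PosDef) : ∃ B : Matrix (Fin d) (Fin d) ℝ, Q⁻¹ = Bᵀ * B := by
  obtain ⟨B, hB⟩ := CStarAlgebra.nonneg_iff_eq_star_mul_self.mp hQ.inv.posSemidef.nonneg
  exact ⟨B, by rw [hB, star_eq_conjTranspose, conjTranspose_eq_transpose_of_trivial]⟩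

theorem qNorm_sub_le {Q : Matrix (Fin d) (Fin d) ℝ} (hQ : Q.PosDef) (v w : Fin d → ℝ) :
    qNorm Q (v - w) ≤ qNorm Q v + qNorm Q w := by
  obtain ⟨B, hB⟩ := hQ.exists_inv_eq_transpose_mul
  simp only [qNorm_eq_qNorm_one_mulVec hB, mulVec_sub, qNorm_one_eq_norm, WithLp.toLp_sub,
    ← add_div]
  exact div_le_div_of_nonneg_right (norm_sub_le _ _) (Real.sqrt_nonneg _)

theorem ellipsoid_sub_ellipsoid_subset {Q : Matrix (Fin d) (Fin d) ℝ} (hQ : Q.PosDef) (r : ℝ) :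
    ellipsoid Q r - ellipsoid Q r ⊆ ellipsoid Q (2 * r) := by
  rintro _ ⟨v, hv, w, hw, rfl⟩
  exact (qNorm_sub_le hQ v w).trans (by simp only [ellipsoid, mem_ofPred_eq] at hv hw; linarith)

theorem det_sq_eq_inv_det {Q B : Matrix (Fin d) (Fin d) ℝ} (hB : Q⁻¹ = Bᵀ * B) :
    B.det ^ 2 = Q.det⁻¹ := by
  rw [← Ring.inverse_eq_inv', ← det_nonsing_inv, hB, det_mul, det_transpose, sq]

theorem abs_det_inv_eq_sqrt_det {Q B : Matrix (Fin d) (Fin d) ℝ} (hB : Q⁻¹ = Bᵀ * B) :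
    |B.det|⁻¹ = √Q.det := by
  rw [← Real.sqrt_sq_eq_abs, det_sq_eq_inv_det hB, Real.sqrt_inv, inv_inv]

theorem det_ne_zero_of_inv_eq_transpose_mul {Q B : Matrix (Fin d) (Fin d) ℝ}
    (hQ : Q.det ≠ 0) (hB : Q⁻¹ = Bᵀ * B) : B.det ≠ 0 :=
  fun h => hQ (inv_eq_zero.mp (by rw [← det_sq_eq_inv_det hB, h, zero_pow two_ne_zero]))

theorem ellipsoid_eq_preimage_mulVec {Q B : Matrix (Fin d) (Fin d) ℝ} (hB : Q⁻¹ = Bᵀ * B)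
    (r : ℝ) : ellipsoid Q r = (toLin' B) ⁻¹' ellipsoid 1 r := by
  ext v
  simp [ellipsoid, qNorm_eq_qNorm_one_mulVec hB]

theorem isCompact_ellipsoid_one (hd : 0 < d) (r : ℝ) :
    IsCompact (ellipsoid (1 : Matrix (Fin d) (Fin d) ℝ) r) := by
  have hsd : 0 < √(d : ℝ) := Real.sqrt_pos.mpr (Nat.cast_pos.mpr hd)
  have hball : ellipsoid (1 : Matrix (Fin d) (Fin d) ℝ) r =
      (EuclideanSpace.equiv (Fin d) ℝ).symm ⁻¹' Metric.closedBall 0 (r * √d) := by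
    ext w
    simp [ellipsoid, qNorm_one_eq_norm, div_le_iff₀ hsd]
  rw [hball]
  exact (EuclideanSpace.equiv (Fin d) ℝ).symm.toHomeomorph.isCompact_preimage.mpr
    (isCompact_closedBall _ _)

theorem isCompact_ellipsoid (hd : 0 < d) {Q : Matrix (Fin d) (Fin d) ℝ} (hQ : Q.PosDef)
    (r : ℝ) : IsCompact (ellipsoid Q r) := by
  obtain ⟨B, hB⟩ := hQ.exists_inv_eq_transpose_mul
  have hBdet := det_ne_zero_of_inv_eq_transpose_mul hQ.det_pos.ne' hB
  let e := LinearMap.equivOfDetNeZero (toLin' B) (by rwa [LinearMap.det_toLin'])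
  rw [ellipsoid_eq_preimage_mulVec hB]
  change IsCompact (e ⁻¹' _)
  rw [← e.image_symm_eq_preimage]
  exact (isCompact_ellipsoid_one hd r).image (LinearMap.continuous_of_finiteDimensional _)

theorem volume_ellipsoid_pos (Q : Matrix (Fin d) (Fin d) ℝ) {r : ℝ} (hr : 0 < r) :
    0 < volume (ellipsoid Q r) := by
  refine (IsOpen.measure_pos volume (isOpen_lt (continuous_qNorm Q) continuous_const)
    ⟨0, ?_⟩).trans_le (measure_mono fun v (hv : qNorm Q v < r) => hv.le)
  simpa [qNorm, qNormSq] using hr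

theorem volume_ellipsoid {Q : Matrix (Fin d) (Fin d) ℝ} (hQ : Q.PosDef) {r : ℝ} (hr : 0 < r) :
    volume (ellipsoid Q r) = ENNReal.ofReal (√Q.det * r ^ d) *
      volume (ellipsoid (1 : Matrix (Fin d) (Fin d) ℝ) 1) := by
  obtain ⟨B, hB⟩ := hQ.exists_inv_eq_transpose_mul
  have hBdet := det_ne_zero_of_inv_eq_transpose_mul hQ.det_pos.ne' hB
  rw [ellipsoid_eq_preimage_mulVec hB, Measure.addHaar_preimage_linearMap _
      (by rwa [LinearMap.det_toLin']), LinearMap.det_toLin', abs_inv, abs_det_inv_eq_sqrt_det hB,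
    ellipsoid_eq_smul _ hr, Measure.addHaar_smul, Module.finrank_fin_fun, abs_of_pos (pow_pos hr d),
    ← mul_assoc, ← ENNReal.ofReal_mul (Real.sqrt_nonneg _)]

theorem Dconst_pow (hd : d ≠ 0) {Q : Matrix (Fin d) (Fin d) ℝ} (hQ : 0 ≤ Q.det) :
    Dconst Q ^ d = √Q.det := by
  rw [Dconst, ← Real.rpow_natCast, ← Real.rpow_mul hQ, Real.sqrt_eq_rpow]
  field_simp

end

/-- For every `d ≥ 1` there is `c > 0` depending only on `d` such that for every
symmetric positive-definite `Q`, with `‖x‖` the norm induced by `Q⁻¹` and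
`D = det(Q)^{1/(2d)}`, for every `L ≥ 1` the number of lattice points with `‖x‖ ≤ L`
is at least `c·D^d·L^d`. -/
theorem lattice_points_in_ellipsoid_lower_bound (d : ℕ) (hd : 1 ≤ d) :
    ∃ c : ℝ, 0 < c ∧ ∀ Q : Matrix (Fin d) (Fin d) ℝ, Q.PosDef →
      ∀ L : ℝ, 1 ≤ L →
        c * Dconst Q ^ d * L ^ d
          ≤ (({x : Fin d → ℤ | qNorm Q (toR x) ≤ L}).ncard : ℝ) := by
  set V := volume (ellipsoid (1 : Matrix (Fin d) (Fin d) ℝ) 1)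
  have hVtop : V ≠ ⊤ := (isCompact_ellipsoid_one hd 1).measure_lt_top.ne
  have hV : 0 < V.toReal := ENNReal.toReal_pos (volume_ellipsoid_pos 1 one_pos).ne' hVtop
  refine ⟨V.toReal / 2 ^ d, by positivity, fun Q hQ L hL => ?_⟩
  have hvol : volume (ellipsoid Q (L / 2))
      = ENNReal.ofReal (V.toReal / 2 ^ d * Dconst Q ^ d * L ^ d) := by
    rw [volume_ellipsoid hQ (by linarith), Dconst_pow (by omega) hQ.det_pos.le]
    conv_rhs => rw [show V.toReal / 2 ^ d * √Q.det * L ^ d = √Q.det * (L / 2) ^ d * V.toReal by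
      rw [div_pow]; ring, ENNReal.ofReal_mul (by positivity), ENNReal.ofReal_toReal hVtop]
  have hsub : ellipsoid Q (L / 2) - ellipsoid Q (L / 2) ⊆ ellipsoid Q L := by
    simpa only [two_mul, add_halves] using ellipsoid_sub_ellipsoid_subset hQ (L / 2)
  have hcount := volume_le_ncard_toR_mem (measurableSet_ellipsoid Q (L / 2)) hsub
    (isCompact_ellipsoid hd hQ L).isBounded
  rwa [hvol, ENNReal.ofReal_le_iff_le_toReal (ENNReal.natCast_ne_top _),
    ENNReal.toReal_natCast] at hcount
end
end
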